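/- Let a₁ < a₂ < … < a_{k−1} be positive integers summing to n. Then the complete (k−1)-partite graph with parts of sizes a₁,…,a_{k−1} satisfies mp(G) = k − 1; consequently f(n,k) ≥ Σ_{i<j} a_i a_j. -/

import Mathlib

open SimpleGraph

/-- Degree of a vertex (as `ncard` of the neighbor set, avoiding decidability). -/
noncomputable def gdeg {V : Type*} (G : SimpleGraph V) (v : V) : ℕ := (G.neighborSet v).ncard

/-- A walk is degree-monotone if the degrees along its support are monotone. -/
def DegMonotone {V : Type*} (G : SimpleGraph V) {u v : V} (p : G.Walk u v) : Prop :=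
  List.Chain' (· ≤ ·) (p.support.map (gdeg G)) ∨
  List.Chain' (fun a b => b ≤ a) (p.support.map (gdeg G))

/-- `mp G`: the maximum number of vertices on a degree-monotone path of `G`. -/
noncomputable def mp {V : Type*} [Fintype V] (G : SimpleGraph V) : ℕ :=
  sSup {n | ∃ (u v : V) (p : G.Walk u v), p.IsPath ∧ DegMonotone G p ∧ p.support.length = n}

/-- The Turán number `t(n,k)`: the maximum number of edges of a `K_k`-free graph
on `n` vertices. -/
noncomputable def turanNum (n k : ℕ) : ℕ :=
  sSup {m | ∃ G : SimpleGraph (Fin n), G.CliqueFree k ∧ G.edgeSet.ncard = m}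

/-- `f(n,k)`: the maximum number of edges of a graph on `n` vertices with no
degree-monotone path on `k` vertices. -/
noncomputable def mpEx (n k : ℕ) : ℕ :=
  sSup {m | ∃ G : SimpleGraph (Fin n), mp G < k ∧ G.edgeSet.ncard = m}

/-! In a complete multipartite graph a vertex in a part of size `a` has degree `n - a`, so when
the part sizes are distinct, adjacent vertices have distinct degrees. A degree-monotone path
then has strictly monotone degrees, hence meets each part at most once; conversely, one vertex
from each part, taken in order of increasing part size, is a degree-monotone path. The edges
are the pairs of vertices in distinct parts, `∑_{i<j} aᵢ aⱼ` of them. -/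

open Finset

theorem List.Nodup.of_isChain_le_of_isChain_ne {α : Type*} [PartialOrder α] {l : List α}
    (hle : l.IsChain (· ≤ ·)) (hne : l.IsChain (· ≠ ·)) : l.Nodup :=
  (List.isChain_iff_getElem.2 fun i hi =>
    (hle.getElem i hi).lt_of_ne (hne.getElem i hi)).pairwise.imp ne_of_lt

section DegMonotone

variable {V : Type*} {G : SimpleGraph V}

theorem DegMonotone.nodup_map_gdeg {u v : V} {p : G.Walk u v} (hp : DegMonotone G p)
    (hG : ∀ x y, G.Adj x y → gdeg G x ≠ gdeg G y) : (p.support.map (gdeg G)).Nodup := by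
  have hne : (p.support.map (gdeg G)).IsChain (· ≠ ·) :=
    List.isChain_map _ |>.2 (p.isChain_adj_support.imp hG)
  rcases hp with hmono | hanti
  · exact .of_isChain_le_of_isChain_ne hmono hne
  · rw [← List.nodup_reverse]
    exact .of_isChain_le_of_isChain_ne (List.isChain_reverse.2 hanti)
      (List.isChain_reverse.2 (hne.imp fun _ _ h => h.symm))

variable [Fintype V]

theorem length_support_le_mp {u v : V} (p : G.Walk u v) (hp : p.IsPath) (hd : DegMonotone G p) :
    p.support.length ≤ mp G := by
  refine le_csSup ⟨Fintype.card V, ?_⟩ ⟨u, v, p, hp, hd, rfl⟩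
  rintro _ ⟨_, _, q, hq, -, rfl⟩
  exact hq.support_nodup.length_le_card

theorem mp_le_of_forall_length_support_le {m : ℕ}
    (h : ∀ u v (p : G.Walk u v), p.IsPath → DegMonotone G p → p.support.length ≤ m) :
    mp G ≤ m :=
  csSup_le' <| by rintro _ ⟨u, v, p, hp, hd, rfl⟩; exact h u v p hp hd

end DegMonotone

theorem edgeSet_ncard_le_mpEx {n k : ℕ} (G : SimpleGraph (Fin n)) (hG : mp G < k) :
    G.edgeSet.ncard ≤ mpEx n k :=
  le_csSup ⟨Nat.card (Sym2 (Fin n)), by rintro _ ⟨H, -, rfl⟩; exact Set.ncard_le_card _⟩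
    ⟨G, hG, rfl⟩

section CompleteMultipartite

variable {V ι : Type*} [Fintype V] {G : SimpleGraph V} {f : V → ι}

theorem gdeg_eq_card_sub_card_fiber [DecidableEq ι] (hadj : ∀ x y, G.Adj x y ↔ f x ≠ f y)
    (x : V) : gdeg G x = Fintype.card V - #{y | f y = f x} := by
  have hnbr : G.neighborSet x = (↑({y | f y = f x} : Finset V) : Set V)ᶜ := by
    ext y
    simp [hadj, eq_comm]
  rw [gdeg, hnbr, Set.ncard_compl, Set.ncard_coe_finset, Nat.card_eq_fintype_card]

theorem mp_le_card_of_injective_card_fiber [Fintype ι] [DecidableEq ι]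
    (hadj : ∀ x y, G.Adj x y ↔ f x ≠ f y)
    (hinj : Function.Injective fun i => #{x | f x = i}) :
    mp G ≤ Fintype.card ι := by
  set deg : ι → ℕ := fun i => Fintype.card V - #{x | f x = i}
  have hgdeg : gdeg G = deg ∘ f := funext (gdeg_eq_card_sub_card_fiber hadj)
  have hdeg : deg.Injective := fun i j h => hinj <| by
    have := card_le_univ {x | f x = i}
    have := card_le_univ {x | f x = j}
    simp only [deg] at h ⊢
    omega
  refine mp_le_of_forall_length_support_le fun u v p _ hp => ?_
  have hnodup := hp.nodup_map_gdeg fun x y hxy h =>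
    (hadj x y).1 hxy (hdeg (by simpa [hgdeg] using h))
  rw [hgdeg, ← List.map_map] at hnodup
  simpa using (hnodup.of_map deg).length_le_card

theorem le_mp_of_monotone_card_fiber {m : ℕ} {f : V → Fin m}
    (hadj : ∀ x y, G.Adj x y ↔ f x ≠ f y) (hne : ∀ i, ∃ x, f x = i)
    (hmono : Monotone fun i => #{x | f x = i}) : m ≤ mp G := by
  rcases m.eq_zero_or_pos with rfl | hm
  · exact Nat.zero_le _
  choose r hr using hne
  have hchain : ((List.finRange m).map r).IsChain G.Adj :=
    List.isChain_map r |>.2 <| (List.pairwise_lt_finRange m).isChain.imp fun i j hij =>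
      (hadj _ _).2 (by rw [hr, hr]; exact hij.ne)
  have hnil : (List.finRange m).map r ≠ [] := by
    simp only [ne_eq, List.map_eq_nil_iff, List.finRange_eq_nil_iff]
    omega
  have hsupp := Walk.support_ofSupport hnil hchain
  refine le_of_eq_of_le (by rw [hsupp]; simp)
    (length_support_le_mp (.ofSupport _ hnil hchain) ?_ (.inr ?_))
  · rw [Walk.isPath_def, hsupp]
    exact (List.nodup_finRange m).map (Function.LeftInverse.injective hr)
  · rw [hsupp, List.map_map]
    refine List.isChain_map _ |>.2 <| (List.pairwise_lt_finRange m).isChain.imp fun i j hij => ?_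
    simp only [Function.comp_apply, gdeg_eq_card_sub_card_fiber hadj, hr]
    exact Nat.sub_le_sub_left (hmono hij.le) _

theorem edgeSet_ncard_eq_sum_card_fiber_mul [LinearOrder ι] [Fintype ι] [DecidableEq V]
    (hadj : ∀ x y, G.Adj x y ↔ f x ≠ f y) :
    G.edgeSet.ncard = ∑ p ∈ univ.filter (fun p : ι × ι => p.1 < p.2),
      #{x | f x = p.1} * #{x | f x = p.2} := by
  -- each edge is counted once, by its endpoints listed with the smaller part first
  have hedge : G.edgeSet = (fun xy : V × V => s(xy.1, xy.2)) '' {xy | f xy.1 < f xy.2} := by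
    ext e
    induction e using Sym2.ind with | _ x y => ?_
    simp only [mem_edgeSet, hadj, Set.mem_image, Set.mem_ofPred_eq, Prod.exists]
    constructor
    · intro h
      rcases h.lt_or_gt with h | h
      · exact ⟨x, y, h, rfl⟩
      · exact ⟨y, x, h, Sym2.eq_swap⟩
    · rintro ⟨a, b, hab, he⟩
      rcases Sym2.eq_iff.1 he with ⟨rfl, rfl⟩ | ⟨rfl, rfl⟩
      exacts [hab.ne, hab.ne']
  have hinj : Set.InjOn (fun xy : V × V => s(xy.1, xy.2)) {xy | f xy.1 < f xy.2} := by
    rintro ⟨a, b⟩ hab ⟨c, d⟩ hcd he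
    rcases Sym2.eq_iff.1 he with ⟨rfl, rfl⟩ | ⟨rfl, rfl⟩
    · rfl
    · exact absurd hab (lt_asymm hcd)
  rw [hedge, hinj.ncard_image, Set.ncard_eq_toFinset_card', Set.toFinset_ofPred,
    card_eq_sum_card_fiberwise (f := fun xy : V × V => (f xy.1, f xy.2))
      (t := univ.filter fun p : ι × ι => p.1 < p.2) (fun xy hxy => by simpa using hxy)]
  refine sum_congr rfl fun p hp => ?_
  rw [← card_product]
  congr 1
  ext ⟨x, y⟩
  simp only [mem_filter, mem_univ, true_and, mem_product] at hp ⊢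
  constructor
  · rintro ⟨-, rfl⟩
    exact ⟨rfl, rfl⟩
  · rintro ⟨hx, hy⟩
    exact ⟨hx ▸ hy ▸ hp, Prod.ext hx hy⟩

end CompleteMultipartite

theorem mp_completeMultipartite_distinct_parts_general (n k : ℕ) (hk : 2 ≤ k)
    (a : Fin (k - 1) → ℕ) (ha1 : ∀ i, 1 ≤ a i) (hmono : StrictMono a)
    (G : SimpleGraph (Fin n)) (f : Fin n → Fin (k - 1))
    (hadj : ∀ x y, G.Adj x y ↔ f x ≠ f y)
    (hfib : ∀ i, (Finset.univ.filter fun x => f x = i).card = a i) :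
    mp G = k - 1 ∧
    (∑ p ∈ Finset.univ.filter (fun p : Fin (k - 1) × Fin (k - 1) => p.1 < p.2),
        a p.1 * a p.2) ≤ mpEx n k := by
  have hsizes : (fun i => #{x | f x = i}) = a := funext hfib
  have hmp : mp G = k - 1 := by
    refine le_antisymm ?_ ?_
    · simpa using mp_le_card_of_injective_card_fiber hadj (hsizes ▸ hmono.injective)
    · refine le_mp_of_monotone_card_fiber hadj (fun i => ?_) (hsizes ▸ hmono.monotone)
      obtain ⟨x, hx⟩ := card_pos.1 ((ha1 i).trans_eq (hfib i).symm)
      exact ⟨x, (mem_filter.1 hx).2⟩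
  refine ⟨hmp, ?_⟩
  calc _ = G.edgeSet.ncard := by simp only [edgeSet_ncard_eq_sum_card_fiber_mul hadj, hfib]
    _ ≤ mpEx n k := edgeSet_ncard_le_mpEx G (by omega)

/-- For positive integers `a₁ < a₂ < ⋯ < a_{k−1}` summing to `n`, the complete
`(k−1)`-partite graph with parts of these sizes satisfies `mp(G) = k − 1`;
consequently `f(n,k) ≥ Σ_{i<j} aᵢ aⱼ`. -/
theorem mp_completeMultipartite_distinct_parts (n k : ℕ) (hk : 2 ≤ k)
    (a : Fin (k - 1) → ℕ) (ha1 : ∀ i, 1 ≤ a i) (hmono : StrictMono a)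
    (hsum : ∑ i, a i = n)
    (G : SimpleGraph (Fin n)) (f : Fin n → Fin (k - 1))
    (hadj : ∀ x y, G.Adj x y ↔ f x ≠ f y)
    (hfib : ∀ i, (Finset.univ.filter fun x => f x = i).card = a i) :
    mp G = k - 1 ∧
    (∑ p ∈ Finset.univ.filter (fun p : Fin (k - 1) × Fin (k - 1) => p.1 < p.2),
        a p.1 * a p.2) ≤ mpEx n k :=
  mp_completeMultipartite_distinct_parts_general n k hk a ha1 hmono G f hadj hfib
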